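/- For any odd positive integer w and any nonnegative integer n: E_{n,χ}(wd) + E_{n,χ}(0) = 2 · T_n(wd − 1, χ). -/

import Mathlib

open Finset

/-- The formal exponential power series `e^{ct} = Σ cⁿ tⁿ/n!` in `ℂ[[t]]`. -/
noncomputable def expPS (c : ℂ) : PowerSeries ℂ :=
  PowerSeries.mk fun n => c ^ n / n.factorial

/-- `Σ_{a=0}^{d-1} (-1)^a χ(a) e^{at}` as a formal power series. -/
noncomputable def altSum (χ : ℤ → ℂ) (d : ℕ) : PowerSeries ℂ :=
  ∑ a ∈ Finset.range d, ((-1 : ℂ) ^ a * χ (a : ℤ)) • expPS (a : ℂ)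

/-- `E` is the family of generalized Euler polynomials attached to `χ` mod `d`:
`(Σ_{n≥0} E_{n,χ}(x) tⁿ/n!) · (e^{dt}+1) = 2 e^{xt} · Σ_{a=0}^{d-1} (-1)^a χ(a) e^{at}`. -/
def IsGenEuler (d : ℕ) (χ : ℤ → ℂ) (E : ℕ → ℂ → ℂ) : Prop :=
  ∀ x : ℂ, (PowerSeries.mk fun n => E n x / n.factorial) * (expPS (d : ℂ) + 1)
    = (2 : PowerSeries ℂ) * expPS x * altSum χ d

/-- The alternating generalized power sum `T_k(n,χ) = Σ_{a=0}^{n} (-1)^a χ(a) a^k`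
(with the convention `0^0 = 1`). -/
noncomputable def altPowSum (χ : ℤ → ℂ) (k n : ℕ) : ℂ :=
  ∑ a ∈ Finset.range (n + 1), (-1 : ℂ) ^ a * χ (a : ℤ) * (a : ℂ) ^ k

/-- The multinomial coefficient `(k+l+m)! / (k! l! m!)`. -/
def multinom (k l m : ℕ) : ℕ :=
  (k + l + m).factorial / (k.factorial * l.factorial * m.factorial)

/-!
Write `F_x(t) = Σ E_{n,χ}(x) tⁿ/n!` and `A(t) = Σ_{a<d} (-1)^a χ(a) e^{at}`. The defining identity
gives `(F_{wd} + F_0)(e^{dt} + 1) = 2 (e^{wdt} + 1) A`. For odd `w`,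
`e^{wdt} + 1 = (e^{dt} + 1) Σ_{j<w} (-e^{dt})^j`, and since `d` is odd and `χ` is `d`-periodic,
`Σ_{j<w} (-e^{dt})^j A(t) = Σ_{a<wd} (-1)^a χ(a) e^{at}`. Cancelling `e^{dt} + 1` (a non-zero
power series) and comparing coefficients of `tⁿ` gives the identity.
-/

open PowerSeries Nat

lemma expPS_eq_rescale_exp (c : ℂ) : expPS c = rescale c (exp ℂ) := by
  ext n
  simp [expPS, coeff_rescale, coeff_exp, div_eq_mul_inv]

lemma expPS_add (a b : ℂ) : expPS (a + b) = expPS a * expPS b := by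
  simp only [expPS_eq_rescale_exp, exp_mul_exp_eq_exp_add]

lemma expPS_zero : expPS 0 = 1 := by
  simp [expPS_eq_rescale_exp, constantCoeff_exp]

lemma expPS_natCast_mul (k : ℕ) (c : ℂ) : expPS (k * c) = expPS c ^ k := by
  induction k with
  | zero => simp [expPS_zero]
  | succ k ih => rw [Nat.cast_succ, add_mul, one_mul, expPS_add, ih, pow_succ]

lemma coeff_expPS (c : ℂ) (n : ℕ) : coeff n (expPS c) = c ^ n / n ! :=
  coeff_mk _ _

lemma expPS_add_one_ne_zero (c : ℂ) : expPS c + 1 ≠ 0 := by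
  intro h
  have h0 := congrArg (coeff 0) h
  rw [map_add, coeff_expPS] at h0
  norm_num at h0

lemma coeff_altSum (χ : ℤ → ℂ) (N n : ℕ) :
    coeff n (altSum χ N) = (∑ a ∈ range N, (-1 : ℂ) ^ a * χ a * (a : ℂ) ^ n) / n ! := by
  simp only [altSum, map_sum, coeff_smul, coeff_expPS, smul_eq_mul, sum_div, mul_div_assoc]

section Periodic

variable {d : ℕ} {χ : ℤ → ℂ}

lemma altSum_mul_add (hd : Odd d) (hper : Function.Periodic χ d) (m : ℕ) :
    altSum χ (m * d + d) = altSum χ (m * d) + (-expPS d) ^ m * altSum χ d := by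
  simp only [altSum]
  rw [sum_range_add, mul_sum]
  congr 1
  refine sum_congr rfl fun i _ => ?_
  have hsign : (-1 : ℂ) ^ (m * d + i) = (-1) ^ m * (-1) ^ i := by
    rw [pow_add, mul_comm m, pow_mul, hd.neg_one_pow]
  have hχ : χ ((m * d + i : ℕ) : ℤ) = χ i := by
    push_cast
    rw [add_comm]
    exact hper.nat_mul m i
  rw [hsign, hχ, Nat.cast_add, expPS_add, Nat.cast_mul, expPS_natCast_mul, neg_pow,
    smul_eq_C_mul, smul_eq_C_mul]
  simp only [map_mul, map_pow, map_neg, map_one]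
  ring

lemma altSum_mul (hd : Odd d) (hper : Function.Periodic χ d) (w : ℕ) :
    altSum χ (w * d) = (∑ j ∈ range w, (-expPS d) ^ j) * altSum χ d := by
  induction w with
  | zero => simp [altSum]
  | succ m ih => rw [add_one_mul, altSum_mul_add hd hper, ih, sum_range_succ, add_mul]

end Periodic

lemma Odd.geom_sum_neg_mul_add_one {R : Type*} [Ring R] {w : ℕ} (hw : Odd w) (x : R) :
    (∑ j ∈ range w, (-x) ^ j) * (x + 1) = x ^ w + 1 := by
  have h := geom_sum_mul_neg (-x) w
  rwa [sub_neg_eq_add, hw.neg_pow, sub_neg_eq_add, add_comm 1, add_comm 1] at h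

theorem stmt_9_general (d : ℕ) (hd : Odd d) (χ : ℤ → ℂ)
    (hper : ∀ a : ℤ, χ (a + d) = χ a)
    (E : ℕ → ℂ → ℂ) (hE : IsGenEuler d χ E)
    (w : ℕ) (hwo : Odd w) (n : ℕ) :
    E n ((w : ℂ) * d) + E n 0 = 2 * altPowSum χ n (w * d - 1) := by
  have hgen : (mk fun k => E k ((w : ℂ) * d) / k !) + (mk fun k => E k 0 / k !)
      = 2 * altSum χ (w * d) := by
    refine mul_right_cancel₀ (expPS_add_one_ne_zero d) ?_
    rw [add_mul, hE, hE, expPS_zero, expPS_natCast_mul, altSum_mul hd hper]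
    linear_combination (-2 * altSum χ d) * hwo.geom_sum_neg_mul_add_one (expPS d)
  have hcoeff := congrArg (coeff n) hgen
  have hwd : w * d - 1 + 1 = w * d := Nat.sub_add_cancel (Nat.mul_pos hwo.pos hd.pos)
  rw [map_add, coeff_mk, coeff_mk, two_mul, map_add, ← two_mul, coeff_altSum, ← mul_div_assoc,
    ← add_div, div_left_inj' (cast_ne_zero.2 n.factorial_ne_zero)] at hcoeff
  rwa [altPowSum, hwd]

/-- For odd positive `w`: `E_{n,χ}(wd) + E_{n,χ}(0) = 2 T_n(wd-1, χ)`. -/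
theorem stmt_9 (d : ℕ) (hd : Odd d) (hd0 : 0 < d) (χ : ℤ → ℂ)
    (hper : ∀ a : ℤ, χ (a + d) = χ a)
    (hmul : ∀ a b : ℤ, χ (a * b) = χ a * χ b) (hone : χ 1 = 1)
    (hvan : ∀ a : ℤ, 1 < Int.gcd a d → χ a = 0)
    (E : ℕ → ℂ → ℂ) (hE : IsGenEuler d χ E)
    (w : ℕ) (hw : 0 < w) (hwo : Odd w) (n : ℕ) :
    E n ((w : ℂ) * d) + E n 0 = 2 * altPowSum χ n (w * d - 1) :=
  stmt_9_general d hd χ hper E hE w hwo n
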